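/- arXiv:1906.02172 — 3 statements merged into one kernel-verified Lean document; each statement's English description precedes it below -/
import Mathlib

section
/- Let G = H₁ × ⋯ × H_k be a direct product of simple groups that are pairwise non-isomorphic. If K is a maximal proper subgroup of G, then there exists an index i such that the projection of K to H_i is a proper subgroup of H_i. -/
section Aux

private lemma conj_mulSingle {ι : Type*} [DecidableEq ι] {H : ι → Type*} [∀ i, Group (H i)]
    (x : ∀ i, H i) (i : ι) (a : H i) :
    x * Pi.mulSingle i a * x⁻¹ = Pi.mulSingle i (x i * a * (x i)⁻¹) := by
  funext j
  by_cases h : j = i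
  · subst h; simp
  · simp [Pi.mulSingle_eq_of_ne h]

private lemma subdirect_eq_top :
    ∀ (n : ℕ) {ι : Type} [Fintype ι] (H : ι → Type u) [∀ i, Group (H i)]
      [∀ i, IsSimpleGroup (H i)], Fintype.card ι = n →
      (∀ i j, i ≠ j → IsEmpty (H i ≃* H j)) →
      ∀ K : Subgroup (∀ i, H i),
        (∀ i, Subgroup.map (Pi.evalMonoidHom H i) K = ⊤) → K = ⊤ := by
  intro n
  induction n with
  | zero =>
    intro ι _ H _ _ hcard _ K _
    have hempty : IsEmpty ι := Fintype.card_eq_zero_iff.mp hcard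
    rw [Subgroup.eq_top_iff']
    intro x
    have : x = 1 := funext fun i => hempty.elim i
    rw [this]; exact K.one_mem
  | succ n ih =>
    intro ι _ H _ _ hcard hnoniso K hproj
    classical
    -- pick a distinguished index
    have hpos : 0 < Fintype.card ι := by omega
    obtain ⟨i₀⟩ := Fintype.card_pos_iff.mp hpos
    set ι' := {j : ι // j ≠ i₀} with hι'
    -- restriction homomorphism
    set p : (∀ i, H i) →* (∀ j : ι', H j.1) :=
      Pi.monoidHom (fun j => Pi.evalMonoidHom H j.1) with hp
    -- surjectivity of each projection, elementwise
    have hsurj : ∀ (i : ι) (h : H i), ∃ x ∈ K, x i = h := by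
      intro i h
      have : h ∈ Subgroup.map (Pi.evalMonoidHom H i) K := (hproj i).symm ▸ Subgroup.mem_top h
      obtain ⟨x, hx, hx'⟩ := this
      exact ⟨x, hx, hx'⟩
    -- the image of K in the smaller product is everything, by induction
    have hcard' : Fintype.card ι' = n := by
      have h1 : Fintype.card {j : ι // ¬ j = i₀} = Fintype.card ι - Fintype.card {j : ι // j = i₀} :=
        Fintype.card_subtype_compl (fun j : ι => j = i₀)
      have h2 : Fintype.card {j : ι // j = i₀} = 1 := Fintype.card_subtype_eq i₀
      have h3 : Fintype.card ι' = Fintype.card {j : ι // ¬ j = i₀} := rfl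
      omega
    have hK' : Subgroup.map p K = ⊤ := by
      refine ih (fun j : ι' => H j.1) hcard'
        (fun i j hij => hnoniso i.1 j.1 (Subtype.coe_injective.ne hij)) _ ?_
      intro j
      rw [Subgroup.map_map]
      have : (Pi.evalMonoidHom (fun j : ι' => H j.1) j).comp p = Pi.evalMonoidHom H j.1 := rfl
      rw [this]; exact hproj j.1
    have hsurj' : ∀ y : (∀ j : ι', H j.1), ∃ x ∈ K, p x = y := by
      intro y
      have : y ∈ Subgroup.map p K := hK'.symm ▸ Subgroup.mem_top y
      obtain ⟨x, hx, hx'⟩ := this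
      exact ⟨x, hx, hx'⟩
    -- the "kernel" subgroup at i₀
    set N : Subgroup (H i₀) := Subgroup.comap (MonoidHom.mulSingle H i₀) K with hN
    have hNnormal : N.Normal := by
      constructor
      intro a ha g
      obtain ⟨x, hx, hxi⟩ := hsurj i₀ g
      have : x * Pi.mulSingle i₀ a * x⁻¹ ∈ K :=
        K.mul_mem (K.mul_mem hx ha) (K.inv_mem hx)
      rw [conj_mulSingle, hxi] at this
      exact this
    rcases hNnormal.eq_bot_or_eq_top with hbot | htop
    · -- N = ⊥ : derive a contradiction
      exfalso
      -- well-definedness of the induced map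
      have hwd : ∀ x ∈ K, ∀ x' ∈ K, p x = p x' → x i₀ = x' i₀ := by
        intro x hx x' hx' hpp
        have hmem : x * x'⁻¹ ∈ K := K.mul_mem hx (K.inv_mem hx')
        have heq : x * x'⁻¹ = Pi.mulSingle i₀ (x i₀ * (x' i₀)⁻¹) := by
          funext j
          by_cases h : j = i₀
          · subst h; simp
          · have : x j = x' j := congrFun hpp ⟨j, h⟩
            simp [Pi.mulSingle_eq_of_ne h, this]
        rw [heq] at hmem
        have : x i₀ * (x' i₀)⁻¹ ∈ N := hmem
        rw [hbot, Subgroup.mem_bot] at this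
        exact mul_inv_eq_one.mp this
      -- section of p inside K
      choose s hsK hsp using hsurj'
      -- the induced homomorphism φ
      set φ : (∀ j : ι', H j.1) →* H i₀ :=
        { toFun := fun y => s y i₀
          map_one' := by
            have := hwd (s 1) (hsK 1) 1 K.one_mem (by rw [hsp]; exact (map_one p).symm)
            simpa using this
          map_mul' := by
            intro y z
            have h1 : p (s y * s z) = y * z := by rw [map_mul, hsp, hsp]
            have := hwd (s (y * z)) (hsK _) (s y * s z) (K.mul_mem (hsK y) (hsK z))
              (by rw [hsp, h1])
            simpa using this } with hφ
      have hφspec : ∀ x ∈ K, φ (p x) = x i₀ := fun x hx =>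
        hwd (s (p x)) (hsK _) x hx (hsp _)
      have hφsurj : Function.Surjective φ := by
        intro h
        obtain ⟨x, hx, hxi⟩ := hsurj i₀ h
        exact ⟨p x, by rw [hφspec x hx, hxi]⟩
      -- each composite φ ∘ single j has normal range
      have hrange : ∀ j : ι',
          ((φ.comp (MonoidHom.mulSingle (fun j : ι' => H j.1) j)).range).Normal := by
        intro j
        constructor
        intro a ha g
        obtain ⟨y, hy⟩ := hφsurj g
        obtain ⟨b, hb⟩ := ha
        refine ⟨y j * b * (y j)⁻¹, ?_⟩
        simp only [MonoidHom.comp_apply, MonoidHom.mulSingle_apply] at hb ⊢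
        rw [← conj_mulSingle y j b, map_mul, map_mul, map_inv, hb, hy]
      by_cases hall : ∀ j : ι', ∀ a : H j.1, φ (Pi.mulSingle j a) = 1
      · -- φ would be trivial, contradicting surjectivity
        obtain ⟨h, hne⟩ := exists_ne (1 : H i₀)
        obtain ⟨y, hy⟩ := hφsurj h
        have key : ∀ s : Finset ι', ∀ z : (∀ j : ι', H j.1),
            (∀ j ∉ s, z j = 1) → φ z = 1 := by
          intro s
          induction s using Finset.induction with
          | empty =>
            intro z hz
            have : z = 1 := funext fun j => hz j (Finset.notMem_empty j)
            rw [this, map_one]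
          | @insert i s hnotmem ihs =>
            intro z hz
            have hdec : z = Pi.mulSingle i (z i) * Function.update z i 1 := by
              funext j
              by_cases hji : j = i
              · subst hji; simp
              · simp [Pi.mulSingle_eq_of_ne hji, Function.update_of_ne hji]
            rw [hdec, map_mul, hall i (z i), one_mul]
            apply ihs
            intro j hj
            by_cases hji : j = i
            · subst hji; simp
            · rw [Function.update_of_ne hji]
              exact hz j (by simp [hj, hji])
        have : φ y = 1 := key Finset.univ y (fun j hj => absurd (Finset.mem_univ j) hj)
        rw [this] at hy
        exact hne hy.symm
      · push_neg at hall
        obtain ⟨j, a, hja⟩ := hall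
        set ψ : H j.1 →* H i₀ := φ.comp (MonoidHom.mulSingle (fun j : ι' => H j.1) j) with hψ
        have hψne : ψ.range ≠ ⊥ := by
          intro hb
          apply hja
          have : ψ a ∈ ψ.range := ⟨a, rfl⟩
          rw [hb, Subgroup.mem_bot] at this
          simpa [hψ] using this
        have hψtop : ψ.range = ⊤ := ((hrange j).eq_bot_or_eq_top).resolve_left hψne
        have hψsurj : Function.Surjective ψ := MonoidHom.range_eq_top.mp hψtop
        have hker : ψ.ker = ⊥ ∨ ψ.ker = ⊤ := (MonoidHom.normal_ker ψ).eq_bot_or_eq_top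
        rcases hker with hker | hker
        · have hinj : Function.Injective ψ := (MonoidHom.ker_eq_bot_iff ψ).mp hker
          have e : H j.1 ≃* H i₀ := MulEquiv.ofBijective ψ ⟨hinj, hψsurj⟩
          exact (hnoniso j.1 i₀ j.2).elim e
        · -- ψ trivial but surjective onto nontrivial group
          apply hja
          have : a ∈ ψ.ker := hker ▸ Subgroup.mem_top a
          simpa [hψ] using this
    · -- N = ⊤ : K contains the i₀ factor, hence K = ⊤
      rw [Subgroup.eq_top_iff']
      intro g
      obtain ⟨x, hx, hpx⟩ := hsurj' (p g)
      have hmem : g * x⁻¹ ∈ K := by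
        have heq : g * x⁻¹ = Pi.mulSingle i₀ (g i₀ * (x i₀)⁻¹) := by
          funext j
          by_cases h : j = i₀
          · subst h; simp
          · have : g j = x j := (congrFun hpx ⟨j, h⟩).symm
            simp [Pi.mulSingle_eq_of_ne h, this]
        rw [heq]
        have : g i₀ * (x i₀)⁻¹ ∈ N := htop ▸ Subgroup.mem_top _
        exact this
      have := K.mul_mem hmem hx
      simpa using this

end Aux

/-- Let `G = H₁ × ⋯ × H_k` be a direct product of pairwise
non-isomorphic simple groups.  If `K` is a maximal proper subgroup of `G`
(a coatom in the subgroup lattice), then there is an index `i` such that the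
projection of `K` to `H i` is a proper subgroup of `H i`. -/
theorem maximal_subgroup_of_product_has_proper_projection
    {k : ℕ} (H : Fin k → Type*) [∀ i, Group (H i)] [∀ i, IsSimpleGroup (H i)]
    (hnoniso : ∀ i j, i ≠ j → IsEmpty (H i ≃* H j))
    (K : Subgroup (∀ i, H i)) (hK : IsCoatom K) :
    ∃ i, Subgroup.map (Pi.evalMonoidHom H i) K ≠ ⊤ := by
  by_contra hcon
  push_neg at hcon
  exact hK.1 (subdirect_eq_top k H (Fintype.card_fin k) hnoniso K hcon)
end

section
/- Let H be a group with subgroups A and B, and φ : A → B an isomorphism. Suppose C = ⟨A, B⟩ admits an automorphism ω with ω² = id, ω(a) = φ(a) for all a ∈ A, and ω(b) = φ⁻¹(b) for all b ∈ B. Then the canonical homomorphism from H to the modular HNN extension H ∗_φ /2 = ⟨H, t | t² = 1, t a t⁻¹ = φ(a) for a ∈ A⟩ is injective. -/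
open Monoid

/-- Let `H` be a group with subgroups `A`, `B` and `φ : A ≃* B` an
isomorphism.  Suppose the subgroup `C = A ⊔ B` admits an automorphism `ω` with
`ω² = id`, `ω(a) = φ(a)` for `a ∈ A` and `ω(b) = φ⁻¹(b)` for `b ∈ B`.  Then the
canonical homomorphism from `H` to the modular HNN extension
`H ∗_φ /2 = (H ∗ ⟨t⟩) / ⟪t², t a t⁻¹ φ(a)⁻¹ (a ∈ A)⟫` is injective.  Here the
free product `H ∗ ⟨t⟩` is `Monoid.Coprod H (FreeGroup Unit)` with
`t = inr (FreeGroup.of ())`. -/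
theorem modular_HNN_injective
    (H : Type*) [Group H] (A B : Subgroup H) (φ : A ≃* B)
    (ω : ↥(A ⊔ B) ≃* ↥(A ⊔ B))
    (hω2 : ∀ x, ω (ω x) = x)
    (hωA : ∀ (a : H) (ha : a ∈ A),
      (ω ⟨a, Subgroup.mem_sup_left ha⟩ : H) = (φ ⟨a, ha⟩ : H))
    (hωB : ∀ (b : H) (hb : b ∈ B),
      (ω ⟨b, Subgroup.mem_sup_right hb⟩ : H) = (φ.symm ⟨b, hb⟩ : H)) :
    Function.Injective
      ((QuotientGroup.mk'
          (Subgroup.normalClosure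
            ({Coprod.inr (FreeGroup.of ()) * Coprod.inr (FreeGroup.of ())} ∪
              {x : Coprod H (FreeGroup Unit) | ∃ (a : H) (ha : a ∈ A),
                x = Coprod.inr (FreeGroup.of ()) * Coprod.inl a *
                      (Coprod.inr (FreeGroup.of ()))⁻¹ *
                      (Coprod.inl ((φ ⟨a, ha⟩ : B) : H))⁻¹}))).comp
        (Coprod.inl : H →* Coprod H (FreeGroup Unit))) := by
  classical
  -- a transversal for the left cosets of C = A ⊔ B
  let rep : H → H := fun x => (QuotientGroup.mk (s := A ⊔ B) x : H ⧸ (A ⊔ B)).out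
  have hrep_mk : ∀ x : H, QuotientGroup.mk (s := A ⊔ B) (rep x) = QuotientGroup.mk x :=
    fun x => QuotientGroup.out_eq' _
  have hrep1 : ∀ x : H, (rep x)⁻¹ * x ∈ A ⊔ B := fun x => (QuotientGroup.eq).mp (hrep_mk x)
  have hrep_congr : ∀ x y : H, x⁻¹ * y ∈ A ⊔ B → rep x = rep y := by
    intro x y h
    show (QuotientGroup.mk (s := A ⊔ B) x : H ⧸ (A ⊔ B)).out = _
    rw [QuotientGroup.eq.mpr h]
  have hx_rep : ∀ x : H, x⁻¹ * rep x ∈ A ⊔ B := by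
    intro x
    have := inv_mem (hrep1 x)
    simpa [mul_inv_rev] using this
  -- the involution implementing t
  let T : H → H := fun x => rep x * (ω ⟨(rep x)⁻¹ * x, hrep1 x⟩ : H)
  have hrepT : ∀ x : H, rep (T x) = rep x := by
    intro x
    refine (hrep_congr _ _ ?_).symm
    show x⁻¹ * (rep x * _) ∈ A ⊔ B
    rw [← mul_assoc]
    exact mul_mem (hx_rep x) (ω ⟨(rep x)⁻¹ * x, hrep1 x⟩).2
  have hrepTmem : ∀ x : H, (rep x)⁻¹ * T x ∈ A ⊔ B := by
    intro x; rw [← hrepT x]; exact hrep1 (T x)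
  have hTelt : ∀ x : H, (⟨(rep x)⁻¹ * T x, hrepTmem x⟩ : ↥(A ⊔ B)) =
      ω ⟨(rep x)⁻¹ * x, hrep1 x⟩ := by
    intro x
    ext
    show (rep x)⁻¹ * T x = _
    simp only [T]
    group
  have hT2 : Function.Involutive T := by
    intro x
    show rep (T x) * (ω ⟨(rep (T x))⁻¹ * T x, hrep1 (T x)⟩ : H) = x
    have he : (⟨(rep (T x))⁻¹ * T x, hrep1 (T x)⟩ : ↥(A ⊔ B)) =
        ω ⟨(rep x)⁻¹ * x, hrep1 x⟩ := by
      rw [← hTelt x]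
      ext
      show (rep (T x))⁻¹ * T x = (rep x)⁻¹ * T x
      rw [hrepT]
    rw [he, hω2, hrepT]
    show rep x * ((rep x)⁻¹ * x) = x
    group
  -- key conjugation identity
  have hTa : ∀ (a : H) (ha : a ∈ A) (x : H),
      T (T x * a⁻¹) = x * ((φ ⟨a, ha⟩ : B) : H)⁻¹ := by
    intro a ha x
    have haC : a ∈ A ⊔ B := Subgroup.mem_sup_left ha
    have hrep' : rep (T x * a⁻¹) = rep x := by
      refine (hrep_congr _ _ ?_).symm
      have h1 : x⁻¹ * T x ∈ A ⊔ B := by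
        have := mul_mem (hx_rep x) (hrepTmem x)
        simpa [mul_assoc] using this
      have := mul_mem h1 (inv_mem haC)
      show x⁻¹ * (T x * a⁻¹) ∈ A ⊔ B
      simpa [mul_assoc] using this
    show rep (T x * a⁻¹) *
      (ω ⟨(rep (T x * a⁻¹))⁻¹ * (T x * a⁻¹), hrep1 _⟩ : H) = x * ((φ ⟨a, ha⟩ : B) : H)⁻¹
    have helt : (⟨(rep (T x * a⁻¹))⁻¹ * (T x * a⁻¹), hrep1 _⟩ : ↥(A ⊔ B)) =
        ω ⟨(rep x)⁻¹ * x, hrep1 x⟩ * (⟨a, haC⟩ : ↥(A ⊔ B))⁻¹ := by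
      ext
      show (rep (T x * a⁻¹))⁻¹ * (T x * a⁻¹) = (ω ⟨(rep x)⁻¹ * x, hrep1 x⟩ : H) * a⁻¹
      rw [hrep']
      simp only [T]
      group
    have hωa : ω (⟨a, haC⟩ : ↥(A ⊔ B)) =
        ⟨((φ ⟨a, ha⟩ : B) : H), Subgroup.mem_sup_right (φ ⟨a, ha⟩).2⟩ := by
      ext
      exact hωA a ha
    have key : (ω ⟨(rep (T x * a⁻¹))⁻¹ * (T x * a⁻¹), hrep1 _⟩ : H) =
        ((rep x)⁻¹ * x) * ((φ ⟨a, ha⟩ : B) : H)⁻¹ := by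
      rw [helt, map_mul, map_inv, hω2, hωa]
      rfl
    rw [key, hrep']
    group
  -- build the permutation representation
  let Tp : Equiv.Perm H := hT2.toPerm
  let ρ : H →* Equiv.Perm H :=
    { toFun := fun h => Equiv.mulRight h⁻¹
      map_one' := by ext x; simp
      map_mul' := by intro a b; ext x; simp [mul_assoc] }
  let f : Coprod H (FreeGroup Unit) →* Equiv.Perm H :=
    Coprod.lift ρ (FreeGroup.lift fun _ => Tp)
  have hfinl : ∀ h : H, f (Coprod.inl h) = ρ h := fun h => Coprod.lift_apply_inl ..
  have hft : f (Coprod.inr (FreeGroup.of ())) = Tp := by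
    simp [f]
  have hker : Subgroup.normalClosure
      ({Coprod.inr (FreeGroup.of ()) * Coprod.inr (FreeGroup.of ())} ∪
        {x : Coprod H (FreeGroup Unit) | ∃ (a : H) (ha : a ∈ A),
          x = Coprod.inr (FreeGroup.of ()) * Coprod.inl a *
                (Coprod.inr (FreeGroup.of ()))⁻¹ *
                (Coprod.inl ((φ ⟨a, ha⟩ : B) : H))⁻¹}) ≤ f.ker := by
    apply Subgroup.normalClosure_le_normal
    rintro x (hx | ⟨a, ha, rfl⟩)
    · rcases hx with rfl
      show f _ = 1
      rw [map_mul, hft]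
      ext y
      exact hT2 y
    · show f _ = 1
      simp only [map_mul, map_inv, hft, hfinl]
      have hTpinv : Tp⁻¹ = Tp := by
        rw [Equiv.Perm.inv_def]
        exact hT2.toPerm_symm
      ext y
      show Tp ((ρ a) (Tp⁻¹ ((ρ ((φ ⟨a, ha⟩ : B) : H))⁻¹ y))) = y
      rw [hTpinv]
      show T (T (y * (((φ ⟨a, ha⟩ : B) : H)⁻¹)⁻¹) * a⁻¹) = y
      rw [inv_inv, hTa a ha]
      group
  -- conclude injectivity
  intro x y hxy
  simp only [MonoidHom.comp_apply, QuotientGroup.mk'_apply, QuotientGroup.eq] at hxy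
  have hfk := hker hxy
  rw [MonoidHom.mem_ker, map_mul, map_inv, inv_mul_eq_one, hfinl, hfinl] at hfk
  have h1 : ρ x 1 = ρ y 1 := by rw [hfk]
  have h2 : (1 : H) * x⁻¹ = (1 : H) * y⁻¹ := h1
  simpa using h2
end

section
/- In an amalgamated free product G = H ∗_C D, the canonical homomorphisms H → G and D → G are injective. -/
open Monoid

section Aux

universe u v w

variable (H : Type u) (D : Type v) (C : Type w) [Group H] [Group D] [Group C]
    (f : C →* H) (g : C →* D)

/-- The two-element family of groups. -/
def amalgG : Bool → Type (max u v) := fun b => match b with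
  | true => ULift.{v} H
  | false => ULift.{u} D

instance amalgGroup : ∀ b, Group (amalgG H D b)
  | true => inferInstanceAs (Group (ULift H))
  | false => inferInstanceAs (Group (ULift D))

/-- The family of maps from `C`. -/
def amalgφ : ∀ b, C →* amalgG H D b
  | true => (MulEquiv.ulift.symm.toMonoidHom : H →* ULift H).comp f
  | false => (MulEquiv.ulift.symm.toMonoidHom : D →* ULift D).comp g

end Aux

/-- In an amalgamated free product `G = H ∗_C D` (realized as the
quotient of the free product `H ∗ D` by the normal closure of the elements
identifying the two embedded copies of `C`), the canonical homomorphisms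
`H → G` and `D → G` are injective.  Here `f : C →* H` and `g : C →* D` are the
given injective homomorphisms. -/
theorem amalgam_factors_inject
    (H D C : Type*) [Group H] [Group D] [Group C]
    (f : C →* H) (g : C →* D)
    (hf : Function.Injective f) (hg : Function.Injective g) :
    Function.Injective
        ((QuotientGroup.mk'
            (Subgroup.normalClosure
              {x : Coprod H D | ∃ c : C,
                x = Coprod.inl (f c) * (Coprod.inr (g c))⁻¹})).comp
          (Coprod.inl : H →* Coprod H D)) ∧
      Function.Injective
        ((QuotientGroup.mk'
            (Subgroup.normalClosure
              {x : Coprod H D | ∃ c : C,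
                x = Coprod.inl (f c) * (Coprod.inr (g c))⁻¹})).comp
          (Coprod.inr : D →* Coprod H D)) := by
  set N := Subgroup.normalClosure
      {x : Coprod H D | ∃ c : C,
        x = Coprod.inl (f c) * (Coprod.inr (g c))⁻¹} with hN
  set φ := amalgφ H D C f g with hφ
  have hφinj : ∀ b, Function.Injective (φ b) := by
    intro b; cases b
    · exact fun a b hab => hg (congrArg ULift.down hab)
    · exact fun a b hab => hf (congrArg ULift.down hab)
  set eH : H →* amalgG H D true :=
    (MulEquiv.ulift.symm.toMonoidHom : H →* ULift H) with heH
  set eD : D →* amalgG H D false :=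
    (MulEquiv.ulift.symm.toMonoidHom : D →* ULift D) with heD
  set ψ : Coprod H D →* PushoutI φ :=
    Coprod.lift ((PushoutI.of (φ := φ) true).comp eH)
      ((PushoutI.of (φ := φ) false).comp eD) with hψ
  have hker : N ≤ ψ.ker := by
    rw [hN]
    apply Subgroup.normalClosure_le_normal
    rintro x ⟨c, rfl⟩
    simp only [Set.mem_preimage, SetLike.mem_coe, MonoidHom.mem_ker, map_mul, map_inv,
      hψ, Coprod.lift_apply_inl, Coprod.lift_apply_inr, MonoidHom.comp_apply]
    rw [show eH (f c) = φ true c from rfl, show eD (g c) = φ false c from rfl,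
      PushoutI.of_apply_eq_base, PushoutI.of_apply_eq_base]
    simp
  set χ : Coprod H D ⧸ N →* PushoutI φ := QuotientGroup.lift N ψ hker with hχ
  have key : ∀ (x : Coprod H D), χ ((QuotientGroup.mk' N) x) = ψ x := fun x => rfl
  constructor
  · have hc : Function.Injective (χ.comp ((QuotientGroup.mk' N).comp Coprod.inl)) := by
      have heq : χ.comp ((QuotientGroup.mk' N).comp Coprod.inl)
          = (PushoutI.of (φ := φ) true).comp eH := by
        ext h
        show ψ (Coprod.inl h) = _
        simp [hψ]
      rw [heq]
      exact (PushoutI.of_injective hφinj true).comp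
        (fun a b hab => congrArg ULift.down hab)
    rw [MonoidHom.coe_comp] at hc
    exact hc.of_comp
  · have hc : Function.Injective (χ.comp ((QuotientGroup.mk' N).comp Coprod.inr)) := by
      have heq : χ.comp ((QuotientGroup.mk' N).comp Coprod.inr)
          = (PushoutI.of (φ := φ) false).comp eD := by
        ext d
        show ψ (Coprod.inr d) = _
        simp [hψ]
      rw [heq]
      exact (PushoutI.of_injective hφinj false).comp
        (fun a b hab => congrArg ULift.down hab)
    rw [MonoidHom.coe_comp] at hc
    exact hc.of_comp
end
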